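/- Define L : [0,∞) → [0,∞) by L(0) = 0 and L(t) = min(t/2, max(2, 8π·log t)) for t > 0, and set ℓ_n = (3/2)^n for integers n ≥ 0. For each n ≥ 0 let M_n = Σ_{k=1}^∞ L^k(ℓ_{n+k}), where L^k denotes the k-fold iterate of L. Then there exists a constant C > 2 such that M_n < C·(n+1) for all n ≥ 0 (in particular, each of these series converges). -/

import Mathlib

open Filter Topology Set OnePoint

noncomputable section

/-- The complex number `2πi`. -/
def twoPiI : ℂ := (2 * (Real.pi : ℂ)) * Complex.I

/-- The "hat" of a planar set: its image in the Riemann sphere `ℂ̂ = OnePoint ℂ`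
together with the point `∞`. -/
def hatSet (A : Set ℂ) : Set (OnePoint ℂ) := OnePoint.some '' A ∪ {∞}

/-- `A` is an arc in the topological space `X` with endpoints `x` and `y`
(possibly degenerate, i.e. a single point when `x = y`). -/
structure IsArc {X : Type*} [TopologicalSpace X] (A : Set X) (x y : X) : Prop where
  mem_left : x ∈ A
  mem_right : y ∈ A
  param : (x = y ∧ A = {x}) ∨
    ∃ f : ℝ → X, ContinuousOn f (Set.Icc 0 1) ∧ Set.InjOn f (Set.Icc 0 1) ∧
      f '' Set.Icc 0 1 = A ∧ f 0 = x ∧ f 1 = y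

/-- `C ⊆ ℂ` is an arc connecting a finite endpoint to infinity: `C ∪ {∞}`, viewed in the
Riemann sphere, is an arc one of whose endpoints is `∞` (the other endpoint being finite). -/
def IsArcToInfinity (C : Set ℂ) : Prop :=
  ∃ z ∈ C, IsArc (hatSet C) (OnePoint.some z) ∞

/-- An unbounded Jordan domain: an open, connected, simply connected subset of `ℂ`,
unbounded, whose boundary together with `∞` forms a Jordan curve in the Riemann sphere. -/
def IsUnboundedJordanDomain (V : Set ℂ) : Prop :=
  IsOpen V ∧ IsConnected V ∧ SimplyConnectedSpace ↥V ∧ ¬ Bornology.IsBounded V ∧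
    Nonempty (↥(hatSet (frontier V)) ≃ₜ ↥(Metric.sphere (0 : ℂ) 1))

/-- The tracts (connected components) of a set `T ⊆ ℂ`. -/
def tracts (T : Set ℂ) : Set (Set ℂ) := {C | ∃ z ∈ T, C = connectedComponentIn T z}

/-- The hair of the set `B ⊆ ℂ ≅ ℝ²` at height `y`. -/
def brushHair (B : Set ℂ) (y : ℝ) : Set ℝ := {x : ℝ | (x : ℂ) + (y : ℂ) * Complex.I ∈ B}

/-- A straight brush, viewed as a subset of `ℂ ≅ ℝ²` (first coordinate = real part,
second coordinate = imaginary part). -/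
structure IsStraightBrush (B : Set ℂ) : Prop where
  closed : IsClosed B
  sub : ∀ z ∈ B, 0 ≤ z.re ∧ Irrational z.im
  hair : ∀ z ∈ B, ∃ t : ℝ, 0 ≤ t ∧ brushHair B z.im = Set.Ici t
  dense : ∀ y : ℝ, Irrational y → y ∈ closure {y' : ℝ | (brushHair B y').Nonempty}
  approx : ∀ z ∈ B, ∀ t : ℝ, brushHair B z.im = Set.Ici t →
    ∃ β γ tβ tγ : ℕ → ℝ,
      (∀ n, β n < z.im ∧ z.im < γ n ∧ brushHair B (β n) = Set.Ici (tβ n) ∧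
        brushHair B (γ n) = Set.Ici (tγ n)) ∧
      Filter.Tendsto β Filter.atTop (nhds z.im) ∧
      Filter.Tendsto γ Filter.atTop (nhds z.im) ∧
      Filter.Tendsto tβ Filter.atTop (nhds t) ∧
      Filter.Tendsto tγ Filter.atTop (nhds t)

/-- A Cantor bouquet: a subset of `ℂ ≅ ℝ²` that is ambiently homeomorphic to a
straight brush. -/
def IsCantorBouquet (A : Set ℂ) : Prop := ∃ h : ℂ ≃ₜ ℂ, IsStraightBrush (h '' A)

/-- Convergence of compact sets in the Hausdorff metric, expressed topologically
(Vietoris convergence); in a compact metrizable space this is equivalent to convergence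
in the Hausdorff metric with respect to any compatible metric. -/
def HausdorffTendsto {X : Type*} [TopologicalSpace X] (A : ℕ → Set X) (L : Set X) : Prop :=
  (∀ U : Set X, IsOpen U → L ⊆ U → ∀ᶠ n in Filter.atTop, A n ⊆ U) ∧
  (∀ U : Set X, IsOpen U → (L ∩ U).Nonempty → ∀ᶠ n in Filter.atTop, (A n ∩ U).Nonempty)

/-- A dendroid: a nonempty compact connected (metrizable) space that is arcwise connected
and hereditarily unicoherent, here as a subset of an ambient topological space. -/
structure IsDendroid {X : Type*} [TopologicalSpace X] (S : Set X) : Prop where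
  nonempty : S.Nonempty
  compact : IsCompact S
  connected : IsConnected S
  arcwise : ∀ x ∈ S, ∀ y ∈ S, ∃ A : Set X, A ⊆ S ∧ IsArc A x y
  hered_unicoherent : ∀ A B : Set X, A ⊆ S → B ⊆ S →
    A.Nonempty → IsCompact A → IsPreconnected A →
    B.Nonempty → IsCompact B → IsPreconnected B → IsPreconnected (A ∩ B)

/-- A dendroid `S` that is smooth at the point `x₀`: whenever `yₙ → y` in `S`, the arcs
`[x₀, yₙ]` converge to `[x₀, y]` in the Hausdorff metric. -/
def IsSmoothDendroidAt {X : Type*} [TopologicalSpace X] (S : Set X) (x₀ : X) : Prop :=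
  IsDendroid S ∧ x₀ ∈ S ∧
    ∀ (y : X) (yn : ℕ → X), y ∈ S → (∀ n, yn n ∈ S) →
      Filter.Tendsto yn Filter.atTop (nhds y) →
      ∀ (An : ℕ → Set X) (A : Set X),
        (∀ n, An n ⊆ S ∧ IsArc (An n) x₀ (yn n)) →
        (A ⊆ S ∧ IsArc A x₀ y) → HausdorffTendsto An A

/-- `x` is accessible from `ℂ ∖ A`. -/
def AccessibleFrom (A : Set ℂ) (x : ℂ) : Prop :=
  ∃ γ : ℝ → ℂ, ContinuousOn γ (Set.Icc 0 1) ∧ (∀ t ∈ Set.Ico (0 : ℝ) 1, γ t ∉ A) ∧ γ 1 = x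

/-- The function `L(t) = min(t/2, max(2, 8π log t))` for `t > 0`, with `L(0) = 0`
(and junk value `0` for negative arguments). -/
def Lfun : ℝ → ℝ := fun t =>
  if t ≤ 0 then 0 else min (t / 2) (max 2 (8 * Real.pi * Real.log t))

/-- A function of the class `B_log`: a holomorphic map `F : 𝒯 → H` satisfying the
conditions (a)–(d) of Definition 2.1 (Rottenfußer–Rückert–Rempe–Schleicher /
Rempe). `F` is modelled as a total function `ℂ → ℂ` whose behaviour is constrained
on `Tr = 𝒯`. -/
structure BlogMap where
  /-- the map -/
  F : ℂ → ℂ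
  /-- the domain `𝒯` -/
  Tr : Set ℂ
  /-- the range `H` -/
  H : Set ℂ
  holo : DifferentiableOn ℂ F Tr
  maps_to : Set.MapsTo F Tr H
  H_jordan : IsUnboundedJordanDomain H
  H_periodic : ∀ z : ℂ, z ∈ H ↔ z + twoPiI ∈ H
  H_halfplane : ∃ R : ℝ, {z : ℂ | R < z.re} ⊆ H
  Tr_nonempty : Tr.Nonempty
  Tr_periodic : ∀ z : ℂ, z ∈ Tr ↔ z + twoPiI ∈ Tr
  Tr_re_bddBelow : ∃ m : ℝ, ∀ z ∈ Tr, m ≤ z.re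
  Tr_re_unbddAbove : ∀ M : ℝ, ∃ z ∈ Tr, M < z.re
  tract_jordan : ∀ C ∈ tracts Tr, IsUnboundedJordanDomain C
  tract_translates : ∀ C ∈ tracts Tr, ∀ k : ℤ, k ≠ 0 →
    Disjoint C ((fun z => z + (k : ℂ) * twoPiI) '' C)
  tract_bij : ∀ C ∈ tracts Tr, Set.BijOn F C H
  tract_ext : ∀ C ∈ tracts Tr, ∃ G : OnePoint ℂ → OnePoint ℂ,
    ContinuousOn G (closure (OnePoint.some '' C)) ∧
    (∀ z ∈ C, G (OnePoint.some z) = OnePoint.some (F z)) ∧ G ∞ = ∞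
  closures_disjoint : ∀ C ∈ tracts Tr, ∀ C' ∈ tracts Tr, C ≠ C' →
    Disjoint (closure C) (closure C')
  tracts_accumulate : ∀ z : ℕ → ℂ, (∀ n, z n ∈ Tr) →
    (Function.Injective fun n => connectedComponentIn Tr (z n)) →
    Filter.Tendsto (fun n => ‖z n‖) Filter.atTop Filter.atTop

namespace BlogMap

/-- `F ∈ B^p_log`: `F` is `2πi`-periodic. -/
def Periodic (Φ : BlogMap) : Prop := ∀ z ∈ Φ.Tr, Φ.F (z + twoPiI) = Φ.F z

/-- `F` is of disjoint type: the closure of `𝒯` is contained in `H`. -/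
def DisjointType (Φ : BlogMap) : Prop := closure Φ.Tr ⊆ Φ.H

/-- The Julia set `J(F) = {z ∈ H : the orbit of z stays in 𝒯}`. -/
def julia (Φ : BlogMap) : Set ℂ := {z | z ∈ Φ.H ∧ ∀ n : ℕ, Φ.F^[n] z ∈ Φ.Tr}

/-- `Ĵ(F) = J(F) ∪ {∞} ⊆ ℂ̂`. -/
def juliaHat (Φ : BlogMap) : Set (OnePoint ℂ) := hatSet Φ.julia

/-- The escaping set `I(F)`. -/
def escaping (Φ : BlogMap) : Set ℂ :=
  {z | z ∈ Φ.julia ∧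
    Filter.Tendsto (fun n => (Φ.F^[n] z).re) Filter.atTop Filter.atTop}

/-- A ray tail of `F`: an injective curve `γ : [t₀, ∞) → I(F)` such that for each `n ≥ 1`
the map `t ↦ Fⁿ(γ(t))` is injective with real parts tending to `+∞`, and such that
`Fⁿ(γ(t)) → ∞` uniformly in `t` as `n → ∞`. -/
structure IsRayTail (Φ : BlogMap) (γ : ℝ → ℂ) (t₀ : ℝ) : Prop where
  cont : ContinuousOn γ (Set.Ici t₀)
  inj : Set.InjOn γ (Set.Ici t₀)
  maps : Set.MapsTo γ (Set.Ici t₀) Φ.escaping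
  iter_inj : ∀ n : ℕ, 1 ≤ n → Set.InjOn (fun t => Φ.F^[n] (γ t)) (Set.Ici t₀)
  iter_tendsto : ∀ n : ℕ, 1 ≤ n →
    Filter.Tendsto (fun t => (Φ.F^[n] (γ t)).re) Filter.atTop Filter.atTop
  unif : ∀ R : ℝ, ∃ N : ℕ, ∀ n : ℕ, N ≤ n → ∀ t : ℝ, t₀ ≤ t →
    R < ‖Φ.F^[n] (γ t)‖

/-- `F` is criniferous: every escaping point is eventually mapped onto a ray tail. -/
def Criniferous (Φ : BlogMap) : Prop :=
  ∀ z ∈ Φ.escaping, ∃ N : ℕ, ∀ n : ℕ, N ≤ n →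
    ∃ (γ : ℝ → ℂ) (t₀ : ℝ), Φ.IsRayTail γ t₀ ∧ ∃ t : ℝ, t₀ ≤ t ∧ γ t = Φ.F^[n] z

/-- An injective curve `γ : (0, ∞) → I(F)` whose restriction to every `[t, ∞)`, `t > 0`,
is a ray tail. -/
def IsRayCurve (Φ : BlogMap) (γ : ℝ → ℂ) : Prop :=
  ContinuousOn γ (Set.Ioi 0) ∧ Set.InjOn γ (Set.Ioi 0) ∧
    Set.MapsTo γ (Set.Ioi 0) Φ.escaping ∧ ∀ t : ℝ, 0 < t → Φ.IsRayTail γ t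

/-- A dynamic ray: a maximal such curve (maximal with respect to inclusion of images). -/
def IsDynamicRay (Φ : BlogMap) (γ : ℝ → ℂ) : Prop :=
  Φ.IsRayCurve γ ∧ ∀ γ' : ℝ → ℂ, Φ.IsRayCurve γ' →
    γ '' Set.Ioi 0 ⊆ γ' '' Set.Ioi 0 → γ '' Set.Ioi 0 = γ' '' Set.Ioi 0

/-- The curve `γ : (0,∞) → ℂ` lands at the point `z`. -/
def LandsAt (γ : ℝ → ℂ) (z : ℂ) : Prop :=
  Filter.Tendsto γ (nhdsWithin 0 (Set.Ioi 0)) (nhds z)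

/-- `z ⪯ w` on `Ĵ(F)`: `w` lies on the arc `[z, ∞]` joining `z` to `∞` in `Ĵ(F)`. -/
def juliaLE (Φ : BlogMap) (z w : ℂ) : Prop :=
  ∃ A : Set (OnePoint ℂ), A ⊆ Φ.juliaHat ∧
    IsArc A (OnePoint.some z) ∞ ∧ OnePoint.some w ∈ A

/-- `z ≺ w` on `Ĵ(F)`. -/
def juliaLT (Φ : BlogMap) (z w : ℂ) : Prop := Φ.juliaLE z w ∧ z ≠ w

/-- `(z, w)` is a bad pair: `z ≺ w`, but there are sequences `zₙ → z`, `wₙ → w` with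
`wₙ ≺ zₙ` for all `n`. -/
def IsBadPair (Φ : BlogMap) (z w : ℂ) : Prop :=
  Φ.juliaLT z w ∧ ∃ zs ws : ℕ → ℂ,
    Filter.Tendsto zs Filter.atTop (nhds z) ∧
    Filter.Tendsto ws Filter.atTop (nhds w) ∧
    ∀ n : ℕ, Φ.juliaLT (ws n) (zs n)

/-- `X` is a bad set: the union of a bad pair with corresponding approximating
sequences. -/
def IsBadSet (Φ : BlogMap) (X : Set ℂ) : Prop :=
  ∃ (z w : ℂ) (zs ws : ℕ → ℂ),
    Φ.juliaLT z w ∧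
    Filter.Tendsto zs Filter.atTop (nhds z) ∧
    Filter.Tendsto ws Filter.atTop (nhds w) ∧
    (∀ n : ℕ, Φ.juliaLT (ws n) (zs n)) ∧
    X = {z, w} ∪ Set.range zs ∪ Set.range ws

/-- `X ⊆ J(F)` is absorbing: forward invariant, every escaping point is eventually
mapped into `X`, and the image of every arc to infinity contained in `X` is again an
arc to infinity. -/
def Absorbing (Φ : BlogMap) (X : Set ℂ) : Prop :=
  Φ.F '' X ⊆ X ∧ (∀ z ∈ Φ.escaping, ∃ n : ℕ, Φ.F^[n] z ∈ X) ∧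
    ∀ A : Set ℂ, A ⊆ X → IsArcToInfinity A → IsArcToInfinity (Φ.F '' A)

/-- `F` satisfies a uniform head-start condition on `J(F)` with respect to `ρ`. -/
def UniformHeadStartOn (Φ : BlogMap) (ρ : ℂ → ℝ) : Prop :=
  ∃ φ : ℝ → ℝ,
    MonotoneOn φ (Set.Ici 0) ∧ UpperSemicontinuousOn φ (Set.Ici 0) ∧
    (∀ t : ℝ, 0 ≤ t → t ≤ φ t ∧ 0 ≤ φ t) ∧
    ∀ z w : ℂ, z ∈ Φ.julia → w ∈ Φ.julia →
      connectedComponentIn Φ.julia z = connectedComponentIn Φ.julia w →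
      ((φ (ρ z) < ρ w → φ (ρ (Φ.F z)) < ρ (Φ.F w)) ∧
        (z ≠ w → ∃ n : ℕ,
          φ (ρ (Φ.F^[n] z)) < ρ (Φ.F^[n] w) ∨ φ (ρ (Φ.F^[n] w)) < ρ (Φ.F^[n] z)))

end BlogMap


/-!
Since `L t ≤ t / 2`, the iterate `L^[k+1] (ℓ_{n+k+1})` is at most `L (ℓ_{n+k+1}) / 2^k`, and
`L (ℓ_m) ≤ 2 + c m` with `c = 8π log (3/2)`. Hence the `k`-th term of `M_n` is at most
`(2 + c) (n + 1) (k + 1) / 2^k`, and `M_n ≤ (2 + c) (n + 1) ∑ₖ (k + 1) / 2^k`.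
-/

lemma Lfun_nonneg (t : ℝ) : 0 ≤ Lfun t := by
  unfold Lfun
  split_ifs with ht
  · exact le_rfl
  · exact le_min (by linarith) (le_max_of_le_left zero_le_two)

lemma Lfun_le_half {t : ℝ} (ht : 0 ≤ t) : Lfun t ≤ t / 2 := by
  unfold Lfun
  split_ifs
  · linarith
  · exact min_le_left _ _

lemma Lfun_iterate_le (m : ℕ) {x : ℝ} (hx : 0 ≤ x) : Lfun^[m] x ≤ x / 2 ^ m := by
  induction m generalizing x with
  | zero => simp
  | succ m ih =>
    calc Lfun^[m + 1] x = Lfun^[m] (Lfun x) := Function.iterate_succ_apply _ _ _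
      _ ≤ Lfun x / 2 ^ m := ih (Lfun_nonneg x)
      _ ≤ x / 2 / 2 ^ m := by gcongr; exact Lfun_le_half hx
      _ = x / 2 ^ (m + 1) := by ring

lemma eight_pi_log_three_halves_nonneg : 0 ≤ 8 * Real.pi * Real.log (3 / 2) := by
  have := Real.log_nonneg (by norm_num : (1 : ℝ) ≤ 3 / 2)
  positivity

lemma Lfun_three_halves_pow_le (m : ℕ) :
    Lfun ((3 / 2 : ℝ) ^ m) ≤ 2 + 8 * Real.pi * Real.log (3 / 2) * m := by
  have hc : 0 ≤ 8 * Real.pi * Real.log (3 / 2) * m :=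
    mul_nonneg eight_pi_log_three_halves_nonneg m.cast_nonneg
  have hpos : ¬ (3 / 2 : ℝ) ^ m ≤ 0 := not_le.mpr (by positivity)
  unfold Lfun
  rw [if_neg hpos, Real.log_pow]
  refine (min_le_right _ _).trans (max_le (by linarith) ?_)
  linarith [mul_comm (m : ℝ) (Real.log (3 / 2))]

lemma Lfun_iterate_three_halves_pow_le (n k : ℕ) :
    Lfun^[k + 1] ((3 / 2 : ℝ) ^ (n + (k + 1))) ≤
      (2 + 8 * Real.pi * Real.log (3 / 2)) * (n + 1) * ((k + 1) * (1 / 2 : ℝ) ^ k) := by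
  set c := 8 * Real.pi * Real.log (3 / 2)
  have hc : 0 ≤ c := eight_pi_log_three_halves_nonneg
  have hlin : 2 + c * ((n + (k + 1) : ℕ) : ℝ) ≤ (2 + c) * (n + 1) * (k + 1) := by
    push_cast
    have : (0 : ℝ) ≤ n * k := by positivity
    nlinarith
  calc Lfun^[k + 1] ((3 / 2 : ℝ) ^ (n + (k + 1)))
      = Lfun^[k] (Lfun ((3 / 2 : ℝ) ^ (n + (k + 1)))) := Function.iterate_succ_apply _ _ _
    _ ≤ Lfun ((3 / 2 : ℝ) ^ (n + (k + 1))) / 2 ^ k := Lfun_iterate_le k (Lfun_nonneg _)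
    _ ≤ (2 + c) * (n + 1) * (k + 1) / 2 ^ k := by
      gcongr; exact (Lfun_three_halves_pow_le _).trans hlin
    _ = (2 + c) * (n + 1) * ((k + 1) * (1 / 2 : ℝ) ^ k) := by
      rw [one_div_pow]; ring

lemma summable_add_one_mul_geometric_half :
    Summable fun k : ℕ => ((k : ℝ) + 1) * (1 / 2 : ℝ) ^ k := by
  have hr : ‖(1 / 2 : ℝ)‖ < 1 := by norm_num
  refine ((summable_pow_mul_geometric_of_norm_lt_one 1 hr).add
    (summable_geometric_of_lt_one (by norm_num : (0 : ℝ) ≤ 1 / 2) (by norm_num))).congr fun k => ?_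
  simp only [pow_one]
  ring

theorem stmt0 :
    ∃ C : ℝ, 2 < C ∧ ∀ n : ℕ,
      (Summable fun k : ℕ => Lfun^[k + 1] ((3 / 2 : ℝ) ^ (n + (k + 1)))) ∧
      (∑' k : ℕ, Lfun^[k + 1] ((3 / 2 : ℝ) ^ (n + (k + 1)))) < C * (n + 1) := by
  set a := 2 + 8 * Real.pi * Real.log (3 / 2)
  set S := ∑' k : ℕ, ((k : ℝ) + 1) * (1 / 2 : ℝ) ^ k
  have ha : 0 ≤ a := by linarith [eight_pi_log_three_halves_nonneg]
  have hS : 0 ≤ S := tsum_nonneg fun k => by positivity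
  refine ⟨a * S + 3, by nlinarith, fun n => ?_⟩
  have hdom := summable_add_one_mul_geometric_half.mul_left (a * (n + 1))
  have hsum : Summable fun k : ℕ => Lfun^[k + 1] ((3 / 2 : ℝ) ^ (n + (k + 1))) :=
    hdom.of_nonneg_of_le (fun k => by rw [Function.iterate_succ_apply']; exact Lfun_nonneg _)
      (Lfun_iterate_three_halves_pow_le n)
  refine ⟨hsum, ?_⟩
  calc ∑' k : ℕ, Lfun^[k + 1] ((3 / 2 : ℝ) ^ (n + (k + 1)))
      ≤ ∑' k : ℕ, a * (n + 1) * ((k + 1) * (1 / 2 : ℝ) ^ k) :=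
        hsum.tsum_le_tsum (Lfun_iterate_three_halves_pow_le n) hdom
    _ = a * S * (n + 1) := by rw [tsum_mul_left]; ring
    _ < (a * S + 3) * (n + 1) := by gcongr; linarith
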